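/- arXiv:1209.4267 — 3 statements merged into one kernel-verified Lean document; each statement's English description precedes it below -/
import Mathlib

section
/- Let {B_i : i ∈ ℕ} be a partition of ℕ into infinite sets, let A : ℕ → 𝒫(ℕ) be a sequence such that the family ran(A) ∪ {B_i} consists of pairwise almost disjoint infinite sets, and let p ⊆ ℕ be almost disjoint from every element of ran(A) ∪ {B_i}. Then for every u ∈ 2^ℕ there exist finite sets F_i ⊆ B_i for each i such that A(j) ∩ F_i = ∅ whenever i > j, and |(p ∪ F_i) ∩ B_i| is odd if and only if u(i) = 1. -/
/-!
Each block `B i` meets `p` and the earlier sets `A j`, `j < i`, in only finitely many points,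
so being infinite it contains a point `x i` outside all of them. Take `F i` empty when
`p ∩ B i` already has the parity prescribed by `u i`, and `{x i}` otherwise: adding `x i`
flips the parity and keeps `F i` away from every `A j` with `j < i`.
-/

open Set

theorem Set.Finite.union_biUnion_Iio_inter {α ι : Type*} [Preorder ι] [LocallyFiniteOrderBot ι]
    {p s : Set α} {A : ι → Set α} (i : ι)
    (hp : (p ∩ s).Finite) (hA : ∀ j, (A j ∩ s).Finite) :
    ((p ∪ ⋃ j ∈ Iio i, A j) ∩ s).Finite := by
  rw [union_inter_distrib_right, iUnion₂_inter]
  exact hp.union ((finite_Iio i).biUnion fun j _ => hA j)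

theorem Set.Infinite.exists_mem_notMem_of_finite_inter {α : Type*} {s t : Set α}
    (hs : s.Infinite) (ht : (t ∩ s).Finite) : ∃ x ∈ s, x ∉ t := by
  obtain ⟨x, hxs, hxt⟩ := hs.exists_notMem_finite ht
  exact ⟨x, hxs, fun h => hxt ⟨h, hxs⟩⟩

theorem Set.odd_ncard_union_singleton_inter_iff {α : Type*} {p s : Set α} {x : α}
    (hxs : x ∈ s) (hxp : x ∉ p) (hp : (p ∩ s).Finite) :
    Odd ((p ∪ {x}) ∩ s).ncard ↔ ¬ Odd (p ∩ s).ncard := by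
  have hinsert : (p ∪ {x}) ∩ s = insert x (p ∩ s) := by
    rw [union_inter_distrib_right, singleton_inter_of_mem hxs, union_comm, singleton_union]
  rw [hinsert, ncard_insert_of_notMem (fun h => hxp h.1) hp, Nat.odd_add_one]

theorem Set.exists_finset_subset_singleton_odd_ncard_iff {α : Type*} {p s : Set α} {x : α}
    (hxs : x ∈ s) (hxp : x ∉ p) (hp : (p ∩ s).Finite) (b : Bool) :
    ∃ F : Finset α, ↑F ⊆ ({x} : Set α) ∧ (Odd ((p ∪ ↑F) ∩ s).ncard ↔ b = true) := by
  classical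
  by_cases h : Odd (p ∩ s).ncard ↔ b = true
  · exact ⟨∅, by simp, by simpa using h⟩
  · refine ⟨{x}, by simp, ?_⟩
    rw [Finset.coe_singleton, odd_ncard_union_singleton_inter_iff hxs hxp hp]
    tauto

theorem stmt2_general (B A : ℕ → Set ℕ) (p : Set ℕ)
    (hBinf : ∀ i, (B i).Infinite)
    (hAB : ∀ i j, (A i ∩ B j).Finite)
    (hpB : ∀ i, (p ∩ B i).Finite) :
    ∀ u : ℕ → Bool, ∃ F : ℕ → Finset ℕ,
      (∀ i, ↑(F i) ⊆ B i) ∧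
      (∀ i j, j < i → A j ∩ ↑(F i) = ∅) ∧
      (∀ i, (Odd ((p ∪ ↑(F i)) ∩ B i).ncard ↔ u i = true)) := by
  intro u
  have hx : ∀ i, ∃ x ∈ B i, x ∉ p ∪ ⋃ j ∈ Iio i, A j := fun i =>
    (hBinf i).exists_mem_notMem_of_finite_inter
      (Finite.union_biUnion_Iio_inter i (hpB i) fun j => hAB j i)
  choose x hxB hxA using hx
  have hF := fun i => exists_finset_subset_singleton_odd_ncard_iff (hxB i)
    (fun h => hxA i (Or.inl h)) (hpB i) (u i)
  choose F hFx hFodd using hF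
  refine ⟨F, fun i => (hFx i).trans (singleton_subset_iff.2 (hxB i)), ?_, hFodd⟩
  intro i j hji
  refine eq_empty_of_forall_notMem fun y ⟨hyA, hyF⟩ => hxA i (Or.inr ?_)
  rw [eq_of_mem_singleton (hFx i hyF)] at hyA
  exact mem_biUnion (mem_Iio.2 hji) hyA

/-- Given a partition of ℕ into infinite sets `B i`, a sequence `A` such that
`ran(A) ∪ {B i}` is a family of pairwise almost disjoint infinite sets, and `p`
almost disjoint from all of them, for every `u ∈ 2^ℕ` there are finite `F i ⊆ B i`
avoiding `A j` for `j < i` whose parity on `B i` together with `p` encodes `u`. -/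
theorem stmt2 (B A : ℕ → Set ℕ) (p : Set ℕ)
    (hBinf : ∀ i, (B i).Infinite)
    (hBdisj : ∀ i j, i ≠ j → Disjoint (B i) (B j))
    (hBcover : (⋃ i, B i) = Set.univ)
    (hAinf : ∀ i, (A i).Infinite)
    (hAA : ∀ i j, i ≠ j → (A i ∩ A j).Finite)
    (hAB : ∀ i j, (A i ∩ B j).Finite)
    (hpA : ∀ i, (p ∩ A i).Finite)
    (hpB : ∀ i, (p ∩ B i).Finite) :
    ∀ u : ℕ → Bool, ∃ F : ℕ → Finset ℕ,
      (∀ i, ↑(F i) ⊆ B i) ∧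
      (∀ i j, j < i → A j ∩ ↑(F i) = ∅) ∧
      (∀ i, (Odd ((p ∪ ↑(F i)) ∩ B i).ncard ↔ u i = true)) :=
  stmt2_general B A p hBinf hAB hpB
end

section
/- Assuming the continuum hypothesis, there exists an uncountable set H ⊆ ℝ² such that the intersection of H with the range of every continuously differentiable curve γ : ℝ → ℝ² is countable. -/
/-!
Under CH there are only `ℵ₁` many `C¹` curves, so they can be listed as `(γ_α)_{α < ω₁}`. Each
range is Lebesgue-null, hence for every `α` there is a point `x_α` outside the null set
`⋃_{β ≤ α} ran γ_β`. Then `ran γ_β` contains `x_α` only for `α < β`, which gives countable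
intersections with `H = {x_α}`. As the curves (already the constant ones) cover the plane, every
point equals `x_α` for countably many `α` only, so `H` is uncountable.
-/

universe u

open MeasureTheory Set
open scoped Cardinal Ordinal

theorem volume_range_eq_zero_of_differentiable {γ : ℝ → ℝ × ℝ} (hγ : Differentiable ℝ γ) :
    volume (range γ) = 0 := by
  have hline : volume (univ ×ˢ {0} : Set (ℝ × ℝ)) = 0 := by
    rw [Measure.volume_eq_prod, Measure.prod_prod, Real.volume_singleton, mul_zero]
  have hrange : range γ = (fun p : ℝ × ℝ ↦ γ p.1) '' univ ×ˢ {0} := by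
    ext; simp
  rw [hrange]
  exact addHaar_image_eq_zero_of_differentiableOn_of_addHaar_eq_zero volume
    (hγ.comp differentiable_fst).differentiableOn hline

theorem ContinuousMap.mk_le_power_aleph0 (X Y : Type u) [TopologicalSpace X] [Nonempty X]
    [TopologicalSpace.SeparableSpace X] [TopologicalSpace Y] [T2Space Y] :
    #C(X, Y) ≤ #Y ^ ℵ₀ := by
  obtain ⟨u, hu⟩ := TopologicalSpace.exists_dense_seq X
  have hinj : Function.Injective fun f : C(X, Y) ↦ f ∘ u := fun f g hfg ↦
    ContinuousMap.ext <| congrFun <| Continuous.ext_on hu f.continuous g.continuous <|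
      by rintro _ ⟨n, rfl⟩; exact congrFun hfg n
  simpa using Cardinal.mk_le_of_injective hinj

theorem mk_contDiff_one_le_continuum : #{γ : ℝ → ℝ × ℝ // ContDiff ℝ 1 γ} ≤ 𝔠 := by
  have hinj : Function.Injective fun γ : {γ : ℝ → ℝ × ℝ // ContDiff ℝ 1 γ} ↦
      (⟨γ.1, γ.2.continuous⟩ : C(ℝ, ℝ × ℝ)) := fun γ δ h ↦ Subtype.ext (congrArg (⇑) h)
  calc _ ≤ #C(ℝ, ℝ × ℝ) := Cardinal.mk_le_of_injective hinj
    _ ≤ 𝔠 := by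
      simpa [Cardinal.mk_real, Cardinal.continuum_power_aleph0] using
        ContinuousMap.mk_le_power_aleph0 ℝ (ℝ × ℝ)

theorem Ordinal.countable_Iio_toType_omega_one (i : (ω₁).ToType) : (Iio i).Countable := by
  rw [← Cardinal.le_aleph0_iff_set_countable, ← Cardinal.lt_aleph_one_iff]
  simpa using Cardinal.mk_Iio_lt i (by simp)

theorem Ordinal.not_countable_toType_omega_one : ¬ Countable (ω₁).ToType := by
  simp [← Cardinal.mk_le_aleph0_iff]

theorem exists_not_countable_forall_countable_inter_of_measure_zero {ι X : Type*} [LinearOrder ι]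
    (hIio : ∀ i : ι, (Iio i).Countable) (hι : ¬ Countable ι) [MeasurableSpace X] (μ : Measure X)
    [NeZero μ] (S : ι → Set X) (hS : ∀ i, μ (S i) = 0) (hcover : ⋃ i, S i = univ) :
    ∃ H : Set X, ¬ H.Countable ∧ ∀ i, (H ∩ S i).Countable := by
  have hIic (i : ι) : μ (⋃ j ∈ Iic i, S j) = 0 := by
    rw [measure_biUnion_null_iff (by simpa [← Iio_insert] using (hIio i).insert i)]
    exact fun j _ ↦ hS j
  choose x hx using fun i ↦ (measure_eq_zero_iff_ae_notMem.1 (hIic i)).exists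
  have hlt {i j : ι} (h : x i ∈ S j) : i < j := by
    by_contra! hji
    exact hx i (mem_biUnion (mem_Iic.2 hji) h)
  have hfiber (p : X) : (x ⁻¹' {p}).Countable := by
    obtain ⟨j, hj⟩ := mem_iUnion.1 (hcover.symm ▸ mem_univ p)
    exact (hIio j).mono fun i (hi : x i = p) ↦ hlt (hi ▸ hj)
  refine ⟨range x, fun hcount ↦ hι ?_, fun j ↦ ((hIio j).image x).mono ?_⟩
  · rw [← countable_univ_iff, ← preimage_range x, ← biUnion_of_singleton (range x),
      preimage_iUnion₂]
    exact hcount.biUnion fun p _ ↦ hfiber p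
  · rintro _ ⟨⟨i, rfl⟩, h⟩
    exact ⟨i, hlt h, rfl⟩

/-- (CH) There is an uncountable set `H ⊆ ℝ²` meeting the range of every `C¹`
curve in a countable set. -/
theorem stmt9 (hCH : Cardinal.mk ℝ = Cardinal.aleph 1) :
    ∃ H : Set (ℝ × ℝ), ¬ H.Countable ∧
      ∀ γ : ℝ → ℝ × ℝ, ContDiff ℝ 1 γ → (H ∩ Set.range γ).Countable := by
  have hcard : #{γ : ℝ → ℝ × ℝ // ContDiff ℝ 1 γ} ≤ #(ω₁).ToType := by
    simpa [← hCH, Cardinal.mk_real] using mk_contDiff_one_le_continuum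
  obtain ⟨c, hc⟩ : ∃ c : (ω₁).ToType → {γ : ℝ → ℝ × ℝ // ContDiff ℝ 1 γ}, c.Surjective :=
    Function.exists_surjective_iff.2 ⟨⟨fun _ ↦ ⟨0, contDiff_const⟩⟩, (Cardinal.le_def _ _).1 hcard⟩
  have hcover : ⋃ i, range (c i).1 = univ := eq_univ_of_forall fun p ↦ by
    obtain ⟨i, hi⟩ := hc ⟨fun _ ↦ p, contDiff_const⟩
    exact mem_iUnion.2 ⟨i, hi ▸ mem_range_self 0⟩
  obtain ⟨H, hH, hHc⟩ := exists_not_countable_forall_countable_inter_of_measure_zero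
    Ordinal.countable_Iio_toType_omega_one Ordinal.not_countable_toType_omega_one volume
    (fun i ↦ range (c i).1)
    (fun i ↦ volume_range_eq_zero_of_differentiable ((c i).2.differentiable one_ne_zero)) hcover
  refine ⟨H, hH, fun γ hγ ↦ ?_⟩
  obtain ⟨i, hi⟩ := hc ⟨γ, hγ⟩
  simpa [hi] using hHc i
end

section
/- Assume CH. There exists a family {A_α : α < ω₁} of countable subsets of Baire space ℕ^ℕ such that: the family is increasing, ⋃_α A_α = ℕ^ℕ, and for every uncountable coanalytic set P ⊆ ℕ^ℕ there is α₀ < ω₁ with |P ∩ (A_{α+1} \ A_α)| ≥ 2 for all α ≥ α₀. Consequently, no set X admitting an enumeration X = {x_α : α < ω₁} with x_α ∉ A_α for all α can be coanalytic. -/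
/-!
Under CH, Baire space and the family of its uncountable coanalytic sets can both be enumerated
in order type `ω₁`: there are at most `𝔠` analytic sets, since each is a continuous image of
Baire space and a continuous map is determined by its values on a countable dense set. Build
`A` by recursion so that `A (α + 1)` contains the `α`-th point and, for every `γ ≤ α`, two
points of the `γ`-th coanalytic set outside `A α`.

If `X = {x α | α < ω₁}` with `x α ∉ A α` were coanalytic, it would be uncountable, so from some
`α₀` on every layer `A (α + 1) \ A α` would contain two points of `X`; one of them is `x (f α)`
with `f α < α`. The layers are disjoint, so `f` is an injective regressive function on a tail
of `ω₁`, which a closing-off argument rules out.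
-/

open Cardinal Set MeasureTheory
open scoped Ordinal

namespace Ordinal

theorem countable_Iio_of_lt_omega_one {o : Ordinal.{u}} (h : o < ω₁) : (Iio o).Countable := by
  rw [← le_aleph0_iff_set_countable, Cardinal.mk_Iio_ordinal, ← Cardinal.lift_aleph0.{u + 1, u},
    Cardinal.lift_le, ← Order.lt_succ_iff, succ_aleph0, ← lt_ord, ord_aleph]
  exact h

theorem exists_lt_omega_one_forall_lt_of_countable {s : Set Ordinal.{u}} (hs : s.Countable)
    (h : ∀ α ∈ s, α < ω₁) : ∃ β < ω₁, ∀ α ∈ s, α < β := by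
  have : Countable s := hs.to_subtype
  refine ⟨⨆ α : s, Order.succ α.1, iSup_lt_omega_one fun α => ?_, fun α hα => ?_⟩
  · exact (isSuccLimit_omega 1).succ_lt (h α α.2)
  · exact (Order.lt_succ α).trans_le (Ordinal.le_iSup (fun α : s => Order.succ α.1) ⟨α, hα⟩)

theorem exists_surjOn_Iio_of_lift_mk_le {α : Type u} [Nonempty α] {o : Ordinal.{v}}
    (h : Cardinal.lift.{v} #α ≤ Cardinal.lift.{u} o.card) :
    ∃ f : Ordinal.{v} → α, SurjOn f (Iio o) Set.univ := by
  have : Cardinal.lift.{v + 1} #α ≤ Cardinal.lift.{u} #(Iio o) := by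
    rw [Cardinal.mk_Iio_ordinal]
    simpa using Cardinal.lift_le.{v + 1}.2 h
  obtain ⟨ι⟩ := Cardinal.lift_mk_le'.1 this
  refine ⟨Function.invFun fun a => (ι a : Ordinal), fun a _ => ⟨ι a, (ι a).2, ?_⟩⟩
  exact Function.leftInverse_invFun (Subtype.val_injective.comp ι.injective) a

theorem exists_surjOn_Iio_omega_one {α : Type v} [Nonempty α] (h : #α ≤ ℵ₁) :
    ∃ f : Ordinal.{u} → α, SurjOn f (Iio ω₁) Set.univ :=
  exists_surjOn_Iio_of_lift_mk_le (by simpa using Cardinal.lift_le.{u}.2 h)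

theorem not_injOn_Ico_omega_one_of_lt {f : Ordinal.{u} → Ordinal.{u}} {α₀ : Ordinal.{u}}
    (hα₀ : α₀ < ω₁) (hf : ∀ α ∈ Ico α₀ ω₁, f α < α) : ¬ InjOn f (Ico α₀ ω₁) := by
  intro hinj
  have bound : ∀ β < ω₁, ∃ β' < ω₁, ∀ α ∈ Ico α₀ ω₁, f α < β → α < β' := by
    intro β hβ
    have hs : (Ico α₀ ω₁ ∩ f ⁻¹' Iio β).Countable :=
      countable_of_injective_of_countable_image (hinj.mono inter_subset_left)
        ((countable_Iio_of_lt_omega_one hβ).mono (by rintro _ ⟨α, hα, rfl⟩; exact hα.2))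
    obtain ⟨β', hβ', hlt⟩ := exists_lt_omega_one_forall_lt_of_countable hs fun α hα => hα.1.2
    exact ⟨β', hβ', fun α hα hfα => hlt α ⟨hα, hfα⟩⟩
  choose! G hG_lt hG using bound
  -- `B` is closed under `G`, so `f` cannot send `B` below `B`.
  set B := nfp G α₀
  have hB : B ∈ Ico α₀ ω₁ := ⟨le_nfp G α₀, nfp_lt_ord (by simp) hG_lt hα₀⟩
  obtain ⟨n, hn⟩ := lt_nfp_iff.1 (hf B hB)
  have hGn : G^[n] α₀ < ω₁ := (iterate_le_nfp G α₀ n).trans_lt hB.2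
  have : B < G^[n + 1] α₀ := by
    rw [Function.iterate_succ_apply']
    exact hG _ hGn B hB hn
  exact (this.trans_le (iterate_le_nfp G α₀ _)).false

end Ordinal

theorem Set.nontrivial_diff_of_not_countable {X : Type*} {P s : Set X} (hP : ¬ P.Countable)
    (hs : s.Countable) : (P \ s).Nontrivial := by
  by_contra h
  exact hP (((not_nontrivial_iff.1 h).countable.union hs).mono (subset_sdiff_union P s))

theorem ContinuousMap.mk_le_mk_nat_arrow {X Y : Type u} [TopologicalSpace X]
    [TopologicalSpace.SeparableSpace X] [Nonempty X] [TopologicalSpace Y] [T2Space Y] :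
    #C(X, Y) ≤ #(ℕ → Y) := by
  obtain ⟨d, hd⟩ := TopologicalSpace.exists_dense_seq X
  refine mk_le_of_injective (f := fun f : C(X, Y) => ⇑f ∘ d) fun f g hfg => ?_
  exact ContinuousMap.ext <| congrFun <| f.continuous.ext_on hd g.continuous <| by
    rintro _ ⟨n, rfl⟩
    exact congrFun hfg n

theorem mk_analyticSet_baire_le : #{s : Set (ℕ → ℕ) // AnalyticSet s} ≤ 𝔠 := by
  let g : Option C(ℕ → ℕ, ℕ → ℕ) → {s : Set (ℕ → ℕ) // AnalyticSet s} := fun o =>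
    o.elim ⟨∅, analyticSet_empty⟩ fun f => ⟨range f, analyticSet_range_of_polishSpace f.continuous⟩
  have hg : Function.Surjective g := by
    rintro ⟨s, hs⟩
    rw [AnalyticSet] at hs
    rcases hs with rfl | ⟨f, hf, rfl⟩
    exacts [⟨none, rfl⟩, ⟨some ⟨f, hf⟩, rfl⟩]
  calc #{s : Set (ℕ → ℕ) // AnalyticSet s} ≤ #C(ℕ → ℕ, ℕ → ℕ) + 1 :=
      mk_option ▸ mk_le_of_surjective hg
    _ ≤ #(ℕ → ℕ → ℕ) + 1 := add_le_add_left ContinuousMap.mk_le_mk_nat_arrow 1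
    _ = 𝔠 := by simp [add_one_of_aleph0_le aleph0_le_continuum]

section Tower

variable {X : Type*}

theorem exists_finite_subset_nontrivial (t : Set X) :
    ∃ u ⊆ t, u.Finite ∧ (t.Nontrivial → u.Nontrivial) := by
  by_cases ht : t.Nontrivial
  · obtain ⟨v, hv, w, hw, hvw⟩ := ht
    exact ⟨{v, w}, insert_subset hv (singleton_subset_iff.2 hw), toFinite _,
      fun _ => nontrivial_pair hvw⟩
  · exact ⟨∅, empty_subset t, finite_empty, fun h => absurd h ht⟩

noncomputable def twoPoints (t : Set X) : Set X :=
  (exists_finite_subset_nontrivial t).choose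

theorem twoPoints_subset (t : Set X) : twoPoints t ⊆ t :=
  (exists_finite_subset_nontrivial t).choose_spec.1

theorem finite_twoPoints (t : Set X) : (twoPoints t).Finite :=
  (exists_finite_subset_nontrivial t).choose_spec.2.1

theorem Set.Nontrivial.twoPoints {t : Set X} (ht : t.Nontrivial) : (twoPoints t).Nontrivial :=
  (exists_finite_subset_nontrivial t).choose_spec.2.2 ht

noncomputable def tower (e : Ordinal.{u} → X) (p : Ordinal.{u} → Set X) (α : Ordinal.{u}) :
    Set X :=
  Ordinal.limitRecOn α ∅ (fun β s => insert (e β) (s ∪ ⋃ γ ≤ β, twoPoints (p γ \ s)))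
    fun β _ s => ⋃ γ, ⋃ h : γ < β, s γ h

variable (e : Ordinal.{u} → X) (p : Ordinal.{u} → Set X)

theorem tower_zero : tower e p 0 = ∅ :=
  Ordinal.limitRecOn_zero ..

theorem tower_add_one (α : Ordinal.{u}) : tower e p (α + 1) =
    insert (e α) (tower e p α ∪ ⋃ γ ≤ α, twoPoints (p γ \ tower e p α)) :=
  Ordinal.limitRecOn_add_one ..

theorem tower_of_isSuccLimit {α : Ordinal.{u}} (hα : Order.IsSuccLimit α) :
    tower e p α = ⋃ γ < α, tower e p γ :=
  Ordinal.limitRecOn_limit _ _ _ _ hα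

theorem tower_subset_tower_add_one (α : Ordinal.{u}) : tower e p α ⊆ tower e p (α + 1) := by
  rw [tower_add_one]
  exact subset_union_left.trans (subset_insert _ _)

theorem tower_mono : Monotone (tower e p) := by
  intro α β hαβ
  induction β using Ordinal.limitRecOn with
  | zero => rw [nonpos_iff_eq_zero.1 hαβ]
  | add_one β ih =>
    rcases hαβ.lt_or_eq with hlt | rfl
    · exact (ih (Order.lt_add_one_iff.1 hlt)).trans (tower_subset_tower_add_one e p β)
    · exact subset_rfl
  | limit β hβ ih =>
    rcases hαβ.lt_or_eq with hlt | rfl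
    · rw [tower_of_isSuccLimit e p hβ]
      exact subset_biUnion_of_mem (u := tower e p) hlt
    · exact subset_rfl

theorem countable_tower {α : Ordinal.{u}} (hα : α < ω₁) : (tower e p α).Countable := by
  induction α using Ordinal.limitRecOn with
  | zero => simp [tower_zero]
  | add_one β ih =>
    have hβ : β < ω₁ := (lt_add_one β).trans hα
    rw [tower_add_one]
    have hIic : (Iic β).Countable :=
      (Ordinal.countable_Iio_of_lt_omega_one hα).mono fun γ (hγ : γ ≤ β) =>
        Order.lt_add_one_iff.2 hγ
    exact ((ih hβ).union <| hIic.biUnion fun γ _ => (finite_twoPoints _).countable).insert _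
  | limit β hβ ih =>
    rw [tower_of_isSuccLimit e p hβ]
    exact (Ordinal.countable_Iio_of_lt_omega_one hα).biUnion fun γ hγ => ih γ hγ (hγ.trans hα)

theorem mem_tower_add_one (α : Ordinal.{u}) : e α ∈ tower e p (α + 1) := by
  rw [tower_add_one]
  exact mem_insert _ _

theorem iUnion_tower_eq_univ (he : SurjOn e (Iio ω₁) Set.univ) :
    ⋃ α ∈ Iio ω₁, tower e p α = Set.univ := by
  refine eq_univ_of_forall fun v => ?_
  obtain ⟨α, hα, rfl⟩ := he (mem_univ v)
  exact mem_biUnion ((isSuccLimit_omega 1).add_one_lt hα) (mem_tower_add_one e p α)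

theorem nontrivial_inter_tower_add_one_diff {α γ : Ordinal.{u}} (hp : ¬ (p γ).Countable)
    (hγα : γ ≤ α) (hα : α < ω₁) :
    (p γ ∩ (tower e p (α + 1) \ tower e p α)).Nontrivial := by
  refine ((nontrivial_diff_of_not_countable hp (countable_tower e p hα)).twoPoints).mono ?_
  intro v hv
  have hv' := twoPoints_subset _ hv
  refine ⟨hv'.1, ?_, hv'.2⟩
  rw [tower_add_one]
  exact mem_insert_of_mem _ (Or.inr (mem_biUnion (show γ ∈ Iic α from hγα) hv))

end Tower

section Layers

variable {Y : Type*} {A : Ordinal.{u} → Set Y} {x : Ordinal.{u} → Y}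

theorem le_of_apply_mem_add_one (hA : MonotoneOn A (Iio ω₁))
    (hx : ∀ α < ω₁, x α ∉ A α) {α γ : Ordinal.{u}} (hγ : γ < ω₁) (h : x γ ∈ A (α + 1)) :
    γ ≤ α := by
  by_contra! hlt
  have hle := Order.add_one_le_of_lt hlt
  exact hx γ hγ (hA (hle.trans_lt hγ) hγ hle h)

theorem exists_lt_apply_mem_add_one_diff (hA : MonotoneOn A (Iio ω₁))
    (hx : ∀ α < ω₁, x α ∉ A α) {α : Ordinal.{u}}
    (h : (x '' Iio ω₁ ∩ (A (α + 1) \ A α)).Nontrivial) : ∃ γ < α, x γ ∈ A (α + 1) \ A α := by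
  obtain ⟨_, ⟨⟨γ, hγ, rfl⟩, hγA⟩, _, ⟨⟨δ, hδ, rfl⟩, hδA⟩, hne⟩ := h
  have hγα := le_of_apply_mem_add_one hA hx hγ hγA.1
  have hδα := le_of_apply_mem_add_one hA hx hδ hδA.1
  rcases lt_or_gt_of_ne (ne_of_apply_ne x hne) with hlt | hlt
  exacts [⟨γ, hlt.trans_le hδα, hγA⟩, ⟨δ, hlt.trans_le hγα, hδA⟩]

theorem not_countable_image_Iio_omega_one (hA : MonotoneOn A (Iio ω₁))
    (hcover : ⋃ α ∈ Iio ω₁, A α = Set.univ) (hx : ∀ α < ω₁, x α ∉ A α) :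
    ¬ (x '' Iio ω₁).Countable := by
  intro hc
  have hmem : ∀ v, ∃ γ < ω₁, v ∈ A γ := fun v => by
    simpa using eq_univ_iff_forall.1 hcover v
  choose! g hg_lt hg_mem using hmem
  obtain ⟨β, hβ, hlt⟩ := Ordinal.exists_lt_omega_one_forall_lt_of_countable (hc.image g)
    (by rintro _ ⟨v, -, rfl⟩; exact hg_lt v)
  exact hx β hβ
    (hA (hg_lt _) hβ (hlt _ (mem_image_of_mem g (mem_image_of_mem x hβ))).le (hg_mem _))

theorem not_forall_nontrivial_inter_add_one_diff (hA : MonotoneOn A (Iio ω₁))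
    (hx : ∀ α < ω₁, x α ∉ A α) : ¬ ∃ α₀ < ω₁, ∀ α : Ordinal, α₀ ≤ α → α < ω₁ →
      (x '' Iio ω₁ ∩ (A (α + 1) \ A α)).Nontrivial := by
  rintro ⟨α₀, hα₀, hlayer⟩
  choose! f hf_lt hf_mem using fun α (hα : α ∈ Ico α₀ ω₁) =>
    exists_lt_apply_mem_add_one_diff hA hx (hlayer α hα.1 hα.2)
  refine Ordinal.not_injOn_Ico_omega_one_of_lt hα₀ hf_lt fun α hα β hβ hfαβ => ?_
  -- `x (f α)` lies in the layer of `α` only, and the layers are disjoint.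
  by_contra hne
  wlog hlt : α < β generalizing α β
  · exact this β hβ α hα hfαβ.symm (Ne.symm hne) ((not_lt.1 hlt).lt_of_ne (Ne.symm hne))
  have hle := Order.add_one_le_of_lt hlt
  exact (hf_mem β hβ).2 (hA (hle.trans_lt hβ.2) hβ.2 hle (hfαβ ▸ (hf_mem α hα).1))

end Layers

theorem exists_enum_uncountable_coanalytic (hCH : #(ℕ → ℕ) = ℵ₁) :
    ∃ p : Ordinal.{u} → Set (ℕ → ℕ), (∀ γ, AnalyticSet (p γ)ᶜ ∧ ¬ (p γ).Countable) ∧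
      ∀ P : Set (ℕ → ℕ), AnalyticSet Pᶜ → ¬ P.Countable → ∃ γ < ω₁, p γ = P := by
  let S := {P : Set (ℕ → ℕ) // AnalyticSet Pᶜ ∧ ¬ P.Countable}
  have hbaire : ¬ (Set.univ : Set (ℕ → ℕ)).Countable := fun h => by
    simpa [aleph0_lt_continuum.not_ge] using mk_le_aleph0_iff.2 (countable_univ_iff.1 h)
  have : Nonempty S := ⟨⟨Set.univ, by simpa using analyticSet_empty, hbaire⟩⟩
  have hS : #S ≤ ℵ₁ := calc
    #S ≤ #{s : Set (ℕ → ℕ) // AnalyticSet s} :=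
      mk_le_of_injective (f := fun P : S => ⟨P.1ᶜ, P.2.1⟩) fun P Q h =>
        Subtype.ext (compl_injective (congrArg Subtype.val h))
    _ ≤ 𝔠 := mk_analyticSet_baire_le
    _ = ℵ₁ := by simpa using hCH
  obtain ⟨f, hf⟩ := Ordinal.exists_surjOn_Iio_omega_one hS
  refine ⟨fun γ => (f γ).1, fun γ => (f γ).2, fun P hP hPc => ?_⟩
  obtain ⟨γ, hγ, hfγ⟩ := hf (mem_univ ⟨P, hP, hPc⟩)
  exact ⟨γ, hγ, congrArg Subtype.val hfγ⟩

open Cardinal MeasureTheory in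
/-- (CH) There is an increasing family `{A_α : α < ω₁}` of countable subsets of
Baire space covering it, such that every uncountable coanalytic set `P` meets
`A_{α+1} \ A_α` in at least two points for all large `α`; consequently no set
enumerated as `{x_α : α < ω₁}` with `x_α ∉ A_α` is coanalytic. -/
theorem stmt11 (hCH : Cardinal.mk (ℕ → ℕ) = Cardinal.aleph 1) :
    ∃ A : Ordinal → Set (ℕ → ℕ),
      (∀ α < (Cardinal.aleph 1).ord, (A α).Countable) ∧
      (∀ α β : Ordinal, α ≤ β → β < (Cardinal.aleph 1).ord → A α ⊆ A β) ∧
      (⋃ α ∈ Set.Iio (Cardinal.aleph 1).ord, A α) = Set.univ ∧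
      (∀ P : Set (ℕ → ℕ), MeasureTheory.AnalyticSet Pᶜ → ¬ P.Countable →
        ∃ α₀ < (Cardinal.aleph 1).ord, ∀ α : Ordinal, α₀ ≤ α →
          α < (Cardinal.aleph 1).ord →
          ∃ v ∈ P ∩ (A (α + 1) \ A α), ∃ w ∈ P ∩ (A (α + 1) \ A α), v ≠ w) ∧
      (∀ (x : Ordinal → (ℕ → ℕ)) (X : Set (ℕ → ℕ)),
        X = {v | ∃ α < (Cardinal.aleph 1).ord, v = x α} →
        (∀ α < (Cardinal.aleph 1).ord, x α ∉ A α) →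
        ¬ MeasureTheory.AnalyticSet Xᶜ) := by
  rw [ord_aleph]
  obtain ⟨e, he⟩ := Ordinal.exists_surjOn_Iio_omega_one hCH.le
  obtain ⟨p, hp, hp_enum⟩ := exists_enum_uncountable_coanalytic hCH
  have hmono : MonotoneOn (tower e p) (Iio ω₁) := (tower_mono e p).monotoneOn _
  have hlayers : ∀ P : Set (ℕ → ℕ), AnalyticSet Pᶜ → ¬ P.Countable → ∃ α₀ < ω₁,
      ∀ α : Ordinal, α₀ ≤ α → α < ω₁ → (P ∩ (tower e p (α + 1) \ tower e p α)).Nontrivial := by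
    intro P hP hPc
    obtain ⟨γ, hγ, rfl⟩ := hp_enum P hP hPc
    exact ⟨γ, hγ, fun α hγα hα => nontrivial_inter_tower_add_one_diff e p (hp γ).2 hγα hα⟩
  have hcover := iUnion_tower_eq_univ e p he
  refine ⟨tower e p, fun α => countable_tower e p, fun α β hαβ _ => tower_mono e p hαβ, hcover,
    hlayers, ?_⟩
  rintro x _ rfl hx hX
  have hX_eq : {v | ∃ α < ω₁, v = x α} = x '' Iio ω₁ := by ext; simp [eq_comm]
  rw [hX_eq] at hX
  exact not_forall_nontrivial_inter_add_one_diff hmono hx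
    (hlayers _ hX (not_countable_image_Iio_omega_one hmono hcover hx))
end
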